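/- arXiv:1212.1801 — 2 statements merged into one kernel-verified Lean document; each statement's English description precedes it below -/
import Mathlib

section
/- Let n and s be natural numbers with 1 ≤ s and 2·s ≤ n, let D > 0 and δ > 0 be reals, and let α, β ∈ (0,1] be reals. Suppose m₀ and m₁ are real numbers satisfying m₀ ≥ ((1−α)·log(1/β) − log 2)/D and m₁ ≥ ((1−β)·log(1/α) − log 2)/D, and suppose the average ((n−s)·m₀ + s·m₁)/n ≤ (log s + log(1/(4δ)))/D. Then 1 − (1−β)^s·(1−α)^(n−s) ≥ 1 − exp(−δ). -/
/-!
If the family-wise success probability `(1 - β) ^ s * (1 - α) ^ (n - s)` exceeded `exp (-δ)`, then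
`1 - x ≤ exp (-x)` would force `s * β < δ` and `(n - s) * α < δ`, so both `log (1 / β)` and
`log (1 / α)` exceed `log (s / δ)`. Wald's bounds then make `D` times the total expected
sample size at least `(n - 2 δ) * log (s / δ) - n * log 2` (when `δ < s`; otherwise the budget is
below `-n * log 2`), and since `2 δ * log (s / δ) < s ≤ n * log 2` this
exceeds the budget `n * log (s / (4 δ)) = n * log (s / δ) - 2 n * log 2`.
-/

open Real

/-- Wald's lower bound, in units of `1 / D`, on the expected sample size of a sequential test
with error probabilities `α` (under the hypothesis being sampled) and `β` (under the other). -/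
noncomputable def waldBound (α β : ℝ) : ℝ := (1 - α) * log (1 / β) - log 2

lemma mul_lt_of_exp_neg_lt_one_sub_pow {x δ : ℝ} {k : ℕ} (hx : x ≤ 1)
    (h : exp (-δ) < (1 - x) ^ k) : k * x < δ := by
  have hpow : (1 - x) ^ k ≤ exp (-(k * x)) :=
    calc (1 - x) ^ k ≤ exp (-x) ^ k := pow_le_pow_left₀ (by linarith) (one_sub_le_exp_neg x) k
      _ = exp (-(k * x)) := by rw [← exp_nat_mul]; ring_nf
  linarith [exp_lt_exp.1 (h.trans_le hpow)]

lemma two_mul_log_lt_self {x : ℝ} (hx : 0 < x) : 2 * log x < x := by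
  rcases le_or_gt (log x) 0 with hlog | hlog
  · linarith
  · calc 2 * log x < exp 1 * log x := mul_lt_mul_of_pos_right exp_one_gt_two hlog
      _ ≤ exp (log x) := exp_one_mul_le_exp
      _ = x := exp_log hx

lemma mul_add_mul_le_of_div_le {n D w₀ w₁ m₀ m₁ A B C : ℝ} (hn : 0 < n) (hD : 0 < D)
    (hw₀ : 0 ≤ w₀) (hw₁ : 0 ≤ w₁) (h₀ : A / D ≤ m₀) (h₁ : B / D ≤ m₁)
    (h : (w₀ * m₀ + w₁ * m₁) / n ≤ C / D) : w₀ * A + w₁ * B ≤ n * C := by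
  rw [div_le_iff₀ hD] at h₀ h₁
  rw [div_le_div_iff₀ hn hD] at h
  linarith [mul_le_mul_of_nonneg_left h₀ hw₀, mul_le_mul_of_nonneg_left h₁ hw₁]

lemma mul_log_div_four_mul_lt_waldBound {a s δ α β : ℝ} (hs : 0 < s) (hsa : s ≤ a)
    (hδ : 0 < δ) (hα0 : 0 < α) (hα1 : α ≤ 1) (hβ0 : 0 < β) (hβ1 : β ≤ 1)
    (hα : a * α < δ) (hβ : s * β < δ) :
    (a + s) * log (s / (4 * δ)) < a * waldBound α β + s * waldBound β α := by
  set L := log (s / δ)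
  have hLα : L ≤ log (1 / α) := log_le_log (by positivity)
    ((div_le_div_iff₀ hδ hα0).2 (by linarith [mul_le_mul_of_nonneg_right hsa hα0.le]))
  have hLβ : L ≤ log (1 / β) := log_le_log (by positivity)
    ((div_le_div_iff₀ hδ hβ0).2 (by linarith))
  have hα' : 0 ≤ log (1 / α) := log_nonneg (one_le_one_div hα0 hα1)
  have hβ' : 0 ≤ log (1 / β) := log_nonneg (one_le_one_div hβ0 hβ1)
  have hc₀ : 0 ≤ a * (1 - α) := mul_nonneg (by linarith) (by linarith)
  have hc₁ : 0 ≤ s * (1 - β) := mul_nonneg hs.le (by linarith)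
  have hlog4 : log (s / (4 * δ)) = L - 2 * log 2 := by
    rw [mul_comm, ← div_div, log_div (by positivity) (by norm_num),
      show (4 : ℝ) = 2 ^ 2 by norm_num, log_pow]
    push_cast
    ring
  suffices (a + s) * (L - log 2) < a * (1 - α) * log (1 / β) + s * (1 - β) * log (1 / α) by
    rw [hlog4]
    unfold waldBound
    linarith
  rcases le_or_gt L 0 with hL | hL
  · have hrhs : 0 ≤ a * (1 - α) * log (1 / β) + s * (1 - β) * log (1 / α) :=
      add_nonneg (mul_nonneg hc₀ hβ') (mul_nonneg hc₁ hα')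
    have hlhs : (a + s) * (L - log 2) < 0 :=
      mul_neg_of_pos_of_neg (by linarith) (by linarith [log_two_gt_d9])
    linarith
  · have hδL : 2 * δ * L < s := by
      have := two_mul_log_lt_self (div_pos hs hδ)
      rw [lt_div_iff₀ hδ] at this
      linarith
    have hs_lt : s < (a + s) * log 2 := by nlinarith [log_two_gt_d9]
    calc (a + s) * (L - log 2) < (a + s - 2 * δ) * L := by linarith
      _ ≤ (a * (1 - α) + s * (1 - β)) * L := mul_le_mul_of_nonneg_right (by linarith) hL.le
      _ ≤ a * (1 - α) * log (1 / β) + s * (1 - β) * log (1 / α) := by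
        linarith [mul_le_mul_of_nonneg_left hLβ hc₀, mul_le_mul_of_nonneg_left hLα hc₁]

/-- Arithmetic core of Theorem 1 (finite sample limitations of sequential
procedures). -/
theorem stmt_0 (n s : ℕ) (hs : 1 ≤ s) (hsn : 2 * s ≤ n)
    (D δ α β m₀ m₁ : ℝ) (hD : 0 < D) (hδ : 0 < δ)
    (hα0 : 0 < α) (hα1 : α ≤ 1) (hβ0 : 0 < β) (hβ1 : β ≤ 1)
    (hm0 : m₀ ≥ ((1 - α) * Real.log (1 / β) - Real.log 2) / D)
    (hm1 : m₁ ≥ ((1 - β) * Real.log (1 / α) - Real.log 2) / D)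
    (hbudget : ((n - s : ℕ) * m₀ + s * m₁) / n ≤ (Real.log s + Real.log (1 / (4 * δ))) / D) :
    1 - (1 - β) ^ s * (1 - α) ^ (n - s) ≥ 1 - Real.exp (-δ) := by
  by_contra hcon
  have hP : exp (-δ) < (1 - β) ^ s * (1 - α) ^ (n - s) := by linarith
  have hsR : (1 : ℝ) ≤ s := by exact_mod_cast hs
  have hsa : (s : ℝ) ≤ (n - s : ℕ) := by exact_mod_cast (by omega : s ≤ n - s)
  have hn : ((n - s : ℕ) : ℝ) + s = n := by
    rw [Nat.cast_sub (by omega : s ≤ n)]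
    ring
  have hβs : s * β < δ := mul_lt_of_exp_neg_lt_one_sub_pow hβ1
    (hP.trans_le (mul_le_of_le_one_right (by positivity) (pow_le_one₀ (by linarith) (by linarith))))
  have hαa : (n - s : ℕ) * α < δ := mul_lt_of_exp_neg_lt_one_sub_pow hα1
    (hP.trans_le (mul_le_of_le_one_left (by positivity) (pow_le_one₀ (by linarith) (by linarith))))
  have hsample := mul_add_mul_le_of_div_le (A := waldBound α β) (B := waldBound β α)
    (by linarith) hD (Nat.cast_nonneg _) (Nat.cast_nonneg _) hm0 hm1 hbudget
  have hwald := mul_log_div_four_mul_lt_waldBound (by linarith) hsa hδ hα0 hα1 hβ0 hβ1 hαa hβs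
  rw [← log_mul (by positivity) (by positivity), mul_one_div] at hsample
  rw [hn] at hwald
  linarith
end

section
/- Let n, s, m, ρ be real numbers with n > 0, 0 ≤ s ≤ n, m ≥ 0, and 0 < ρ < 1, and let K ≥ 1 be a natural number. Then ∑_{k=1}^{K} (m·k·ρ²·n/(n + s·K²)) · ((1−ρ)^{k−1}·(n−s) + s) ≤ m·n. -/
/-!
With `D = n + s K²`, every term carries the factor `m n / D`, so it suffices that
`(n - s) · ρ² ∑ k (1 - ρ)^(k-1) + s · ρ² ∑ k ≤ D`. The first sum is a truncated derivative of
the geometric series, `ρ² ∑_{k ≤ K} k (1 - ρ)^(k-1) = 1 - (1 - ρ)^K (1 + K ρ) ≤ 1`, and the second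
is at most `K²`.
-/

open Finset

theorem sq_mul_sum_Icc_mul_one_sub_pow {R : Type*} [CommRing R] (ρ : R) (K : ℕ) :
    ρ ^ 2 * ∑ k ∈ Icc 1 K, (k : R) * (1 - ρ) ^ (k - 1) = 1 - (1 - ρ) ^ K * (1 + K * ρ) := by
  induction K with
  | zero => simp
  | succ K ih =>
    rw [sum_Icc_succ_top (by omega), mul_add, ih]
    push_cast
    ring

theorem sq_mul_sum_Icc_mul_one_sub_pow_le_one {ρ : ℝ} (hρ0 : 0 ≤ ρ) (hρ1 : ρ ≤ 1) (K : ℕ) :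
    ρ ^ 2 * ∑ k ∈ Icc 1 K, (k : ℝ) * (1 - ρ) ^ (k - 1) ≤ 1 := by
  rw [sq_mul_sum_Icc_mul_one_sub_pow]
  have : 0 ≤ (1 - ρ) ^ K * (1 + K * ρ) := by
    have := sub_nonneg.mpr hρ1
    positivity
  linarith

theorem sum_Icc_natCast_le_sq {R : Type*} [Semiring R] [PartialOrder R] [IsOrderedRing R]
    (K : ℕ) : ∑ k ∈ Icc 1 K, (k : R) ≤ (K : R) ^ 2 := by
  calc ∑ k ∈ Icc 1 K, (k : R) ≤ #(Icc 1 K) • (K : R) :=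
        sum_le_card_nsmul _ _ _ fun k hk ↦ Nat.mono_cast (mem_Icc.mp hk).2
    _ = (K : R) ^ 2 := by simp [sq]

theorem stmt_11_general (n s m ρ : ℝ) (hn : 0 < n) (hs0 : 0 ≤ s) (hsn : s ≤ n)
    (hm : 0 ≤ m) (hρ0 : 0 < ρ) (hρ1 : ρ < 1) (K : ℕ) :
    ∑ k ∈ Finset.Icc 1 K,
        (m * k * ρ ^ 2 * n / (n + s * (K : ℝ) ^ 2)) *
          ((1 - ρ) ^ (k - 1) * (n - s) + s) ≤ m * n := by
  set D := n + s * (K : ℝ) ^ 2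
  have hD : 0 < D := by positivity
  have hfactor : ∑ k ∈ Icc 1 K, (m * k * ρ ^ 2 * n / D) * ((1 - ρ) ^ (k - 1) * (n - s) + s)
      = m * n / D * ((n - s) * (ρ ^ 2 * ∑ k ∈ Icc 1 K, (k : ℝ) * (1 - ρ) ^ (k - 1))
          + s * ρ ^ 2 * ∑ k ∈ Icc 1 K, (k : ℝ)) := by
    simp only [mul_add, mul_sum, ← sum_add_distrib]
    refine sum_congr rfl fun k _ ↦ ?_
    ring
  have hgeom : (n - s) * (ρ ^ 2 * ∑ k ∈ Icc 1 K, (k : ℝ) * (1 - ρ) ^ (k - 1)) ≤ n - s :=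
    mul_le_of_le_one_right (sub_nonneg.mpr hsn)
      (sq_mul_sum_Icc_mul_one_sub_pow_le_one hρ0.le hρ1.le K)
  have hlin : s * ρ ^ 2 * ∑ k ∈ Icc 1 K, (k : ℝ) ≤ s * (K : ℝ) ^ 2 := by
    rw [mul_assoc]
    refine mul_le_mul_of_nonneg_left ?_ hs0
    exact (mul_le_of_le_one_left (sum_nonneg fun k _ ↦ k.cast_nonneg)
      (pow_le_one₀ hρ0.le hρ1.le)).trans (sum_Icc_natCast_le_sq K)
  rw [hfactor]
  calc _ ≤ m * n / D * D := by gcongr; linarith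
    _ = m * n := div_mul_cancel₀ _ hD.ne'

/-- Measurement-budget inequality from Appendix D for Sequential
Thresholding. -/
theorem stmt_11 (n s m ρ : ℝ) (hn : 0 < n) (hs0 : 0 ≤ s) (hsn : s ≤ n)
    (hm : 0 ≤ m) (hρ0 : 0 < ρ) (hρ1 : ρ < 1) (K : ℕ) (hK : 1 ≤ K) :
    ∑ k ∈ Finset.Icc 1 K,
        (m * k * ρ ^ 2 * n / (n + s * (K : ℝ) ^ 2)) *
          ((1 - ρ) ^ (k - 1) * (n - s) + s) ≤ m * n :=
  stmt_11_general n s m ρ hn hs0 hsn hm hρ0 hρ1 K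
end
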